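/- Consider the NSY algebra A = B_{n,ℓ}(m₀,…,m_{n−1}) with basis {X_{i,j}^{r,s}}. The element C = Σᵢ Σ_r Σ_{k=0}^{ℓ−1} Σ_t Σ_{t'} (1 − δ_{m_{i+k}, m_{i+k−ℓ+1}}(1 − δ_{t,t'})) · X_{i,k}^{r,t} ⊗ X_{i+k−ℓ+1, ℓ−1−k}^{t', r} ∈ A ⊗ A is a Casimir element: (x ⊗ 1)C = C(1 ⊗ x) for all x ∈ A. Consequently Δ(x) := C·(1 ⊗ x) makes A a non-counital Frobenius algebra. -/

import Mathlib

set_option linter.unusedSectionVars false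


open TensorProduct

/-!
The NSY algebra `A = B_{n,ℓ}(m₀,…,m_{n-1})` realized on `Idx → k` with basis `{X_{i,j}^{r,s}}`,
multiplication `mulA` and its Casimir element
`C = ∑_{i,r,k,t,t'} (1 - δ_{m_{i+k},m_{i+k-ℓ+1}}(1-δ_{t,t'})) ·
      X_{i,k}^{r,t} ⊗ X_{i+k-ℓ+1,ℓ-1-k}^{t',r}`.
Statement 8: `(x ⊗ 1)C = C(1 ⊗ x)` for all `x`, and consequently `Δ(x) := C·(1⊗x)` makes `A` a
non-counital Frobenius algebra (coassociative `A`-bimodule comultiplication).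
-/

abbrev Idx (n ℓ : ℕ) (m : ZMod n → ℕ) : Type _ :=
  Σ (i : ZMod n) (j : Fin ℓ), Fin (m i) × Fin (m (i + ((j : ℕ) : ZMod n)))

noncomputable def e (k : Type*) [Field k] (n ℓ : ℕ) [NeZero n] (m : ZMod n → ℕ)
    (p : Idx n ℓ m) : Idx n ℓ m → k :=
  Pi.single p 1

lemma idx_vertex_eq (n ℓ : ℕ) [NeZero n] (m : ZMod n → ℕ) (p q : Idx n ℓ m)
    (h1 : q.1 = p.1 + ((p.2.1 : ℕ) : ZMod n)) :
    m (q.1 + ((q.2.1 : ℕ) : ZMod n))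
      = m (p.1 + ((((p.2.1 : ℕ) + (q.2.1 : ℕ)) : ℕ) : ZMod n)) := by
  rcases q with ⟨qi, qj, qr, qs⟩
  have h1' : qi = p.1 + ((p.2.1 : ℕ) : ZMod n) := h1
  subst h1'
  congr 1
  push_cast
  ring

noncomputable def sc (k : Type*) [Field k] (n ℓ : ℕ) [NeZero n] (m : ZMod n → ℕ)
    (p q t : Idx n ℓ m) : k :=
  if h : q.1 = p.1 + ((p.2.1 : ℕ) : ZMod n) ∧ (q.2.2.1 : ℕ) = (p.2.2.2 : ℕ) ∧
      (p.2.1 : ℕ) + (q.2.1 : ℕ) < ℓ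
    then (if t = ⟨p.1, ⟨(p.2.1 : ℕ) + (q.2.1 : ℕ), h.2.2⟩,
            (p.2.2.1, Fin.cast (idx_vertex_eq n ℓ m p q h.1) q.2.2.2)⟩
          then 1 else 0)
    else 0

noncomputable def mulA (k : Type*) [Field k] (n ℓ : ℕ) [NeZero n] (m : ZMod n → ℕ)
    (x y : Idx n ℓ m → k) : Idx n ℓ m → k :=
  fun t => ∑ p : Idx n ℓ m, ∑ q : Idx n ℓ m, x p * y q * sc k n ℓ m p q t


lemma mulA_add_left (k : Type*) [Field k] (n ℓ : ℕ) [NeZero n] (m : ZMod n → ℕ)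
    (x x' y : Idx n ℓ m → k) :
    mulA k n ℓ m (x + x') y = mulA k n ℓ m x y + mulA k n ℓ m x' y := by
  funext t
  simp only [mulA, Pi.add_apply]
  rw [← Finset.sum_add_distrib]
  refine Finset.sum_congr rfl fun p _ => ?_
  rw [← Finset.sum_add_distrib]
  exact Finset.sum_congr rfl fun q _ => by ring

lemma mulA_add_right (k : Type*) [Field k] (n ℓ : ℕ) [NeZero n] (m : ZMod n → ℕ)
    (x y y' : Idx n ℓ m → k) :
    mulA k n ℓ m x (y + y') = mulA k n ℓ m x y + mulA k n ℓ m x y' := by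
  funext t
  simp only [mulA, Pi.add_apply]
  rw [← Finset.sum_add_distrib]
  refine Finset.sum_congr rfl fun p _ => ?_
  rw [← Finset.sum_add_distrib]
  exact Finset.sum_congr rfl fun q _ => by ring

lemma mulA_smul_left (k : Type*) [Field k] (n ℓ : ℕ) [NeZero n] (m : ZMod n → ℕ)
    (c : k) (x y : Idx n ℓ m → k) :
    mulA k n ℓ m (c • x) y = c • mulA k n ℓ m x y := by
  funext t
  simp only [mulA, Pi.smul_apply, smul_eq_mul, Finset.mul_sum]
  refine Finset.sum_congr rfl fun p _ => ?_
  refine Finset.sum_congr rfl fun q _ => by ring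

lemma mulA_smul_right (k : Type*) [Field k] (n ℓ : ℕ) [NeZero n] (m : ZMod n → ℕ)
    (c : k) (x y : Idx n ℓ m → k) :
    mulA k n ℓ m x (c • y) = c • mulA k n ℓ m x y := by
  funext t
  simp only [mulA, Pi.smul_apply, smul_eq_mul, Finset.mul_sum]
  refine Finset.sum_congr rfl fun p _ => ?_
  refine Finset.sum_congr rfl fun q _ => by ring

section CasimirData

variable (k : Type*) [Field k] (n ℓ : ℕ) [NeZero n] (hℓ : 1 ≤ ℓ) (m : ZMod n → ℕ)

/-- The vertex `i + k - (ℓ-1)` (mod `n`). -/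
noncomputable def vtx (i : ZMod n) (kk : Fin ℓ) : ZMod n :=
  i + (((kk : ℕ)) : ZMod n) - (((ℓ - 1 : ℕ)) : ZMod n)

lemma vtx_back (i : ZMod n) (kk : Fin ℓ) :
    m i = m (vtx n ℓ i kk + (((ℓ - 1 - (kk : ℕ) : ℕ)) : ZMod n)) := by
  congr 1
  have hk : (kk : ℕ) ≤ ℓ - 1 := by omega
  unfold vtx
  push_cast [Nat.cast_sub hk]
  ring

/-- The first tensor factor `X_{i,k}^{r,t}` of the Casimir element. -/
noncomputable def cFst (i : ZMod n) (kk : Fin ℓ) (r : Fin (m i))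
    (t : Fin (m (i + ((kk : ℕ) : ZMod n)))) : Idx n ℓ m :=
  ⟨i, kk, (r, t)⟩

/-- The second tensor factor `X_{i+k-ℓ+1, ℓ-1-k}^{t', r}` of the Casimir element. -/
noncomputable def cSnd (i : ZMod n) (kk : Fin ℓ) (r : Fin (m i))
    (t' : Fin (m (vtx n ℓ i kk))) : Idx n ℓ m :=
  ⟨vtx n ℓ i kk, ⟨ℓ - 1 - (kk : ℕ), by omega⟩, (t', Fin.cast (vtx_back n ℓ m i kk) r)⟩

/-- The coefficient `1 - δ_{m_{i+k}, m_{i+k-ℓ+1}}(1 - δ_{t,t'})`. -/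
noncomputable def cCoef (i : ZMod n) (kk : Fin ℓ) (t : Fin (m (i + ((kk : ℕ) : ZMod n))))
    (t' : Fin (m (vtx n ℓ i kk))) : k :=
  if m (i + ((kk : ℕ) : ZMod n)) = m (vtx n ℓ i kk)
    then (if (t : ℕ) = (t' : ℕ) then 1 else 0) else 1

/-- The comultiplication `Δ(x) = C · (1 ⊗ x)` as a linear map `A → A ⊗ A`. -/
noncomputable def DL : (Idx n ℓ m → k) →ₗ[k] (Idx n ℓ m → k) ⊗[k] (Idx n ℓ m → k) where
  toFun x :=
    ∑ i : ZMod n, ∑ kk : Fin ℓ, ∑ r : Fin (m i), ∑ t : Fin (m (i + ((kk : ℕ) : ZMod n))),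
      ∑ t' : Fin (m (vtx n ℓ i kk)),
        cCoef k n ℓ m i kk t t' •
          (e k n ℓ m (cFst n ℓ m i kk r t)
            ⊗ₜ[k] mulA k n ℓ m (e k n ℓ m (cSnd n ℓ m i kk r t')) x)
  map_add' := by
    intro x y
    simp only [mulA_add_right, TensorProduct.tmul_add, smul_add, Finset.sum_add_distrib]
  map_smul' := by
    intro c x
    simp only [mulA_smul_right, TensorProduct.tmul_smul, RingHom.id_apply, Finset.smul_sum,
      smul_comm c]

/-- Right multiplication by `y` as a linear map. -/
noncomputable def mulRightL (y : Idx n ℓ m → k) : (Idx n ℓ m → k) →ₗ[k] (Idx n ℓ m → k) where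
  toFun x := mulA k n ℓ m x y
  map_add' := fun x x' => mulA_add_left k n ℓ m x x' y
  map_smul' := fun c x => mulA_smul_left k n ℓ m c x y

/-- Left multiplication by `x` as a linear map. -/
noncomputable def mulLeftL (x : Idx n ℓ m → k) : (Idx n ℓ m → k) →ₗ[k] (Idx n ℓ m → k) where
  toFun y := mulA k n ℓ m x y
  map_add' := fun y y' => mulA_add_right k n ℓ m x y y'
  map_smul' := fun c y => mulA_smul_right k n ℓ m c x y

end CasimirData

section Aux
variable (k : Type*) [Field k] (n ℓ : ℕ) [NeZero n] (m : ZMod n → ℕ)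

lemma idx_eq_iff (u w : Idx n ℓ m) :
    u = w ↔ u.1 = w.1 ∧ (u.2.1 : ℕ) = (w.2.1 : ℕ) ∧ (u.2.2.1 : ℕ) = (w.2.2.1 : ℕ) ∧
      (u.2.2.2 : ℕ) = (w.2.2.2 : ℕ) := by
  constructor
  · rintro rfl; exact ⟨rfl, rfl, rfl, rfl⟩
  · obtain ⟨ui, uj, ur, us⟩ := u; obtain ⟨wi, wj, wr, ws⟩ := w
    rintro ⟨h1, h2, h3, h4⟩
    dsimp at h1 h2 h3 h4
    subst h1
    have hj : uj = wj := Fin.ext h2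
    subst hj
    have hr : ur = wr := Fin.ext h3
    have hs : us = ws := Fin.ext h4
    subst hr; subst hs; rfl

/-- The composable condition for `sc`. -/
def Comp (p q : Idx n ℓ m) : Prop :=
  q.1 = p.1 + ((p.2.1 : ℕ) : ZMod n) ∧ (q.2.2.1 : ℕ) = (p.2.2.2 : ℕ) ∧
    (p.2.1 : ℕ) + (q.2.1 : ℕ) < ℓ

instance (p q : Idx n ℓ m) : Decidable (Comp n ℓ m p q) := by
  unfold Comp; infer_instance

/-- The composite basis element. -/
noncomputable def compIdx (p q : Idx n ℓ m) (h : Comp n ℓ m p q) : Idx n ℓ m :=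
  ⟨p.1, ⟨(p.2.1 : ℕ) + (q.2.1 : ℕ), h.2.2⟩,
    (p.2.2.1, Fin.cast (idx_vertex_eq n ℓ m p q h.1) q.2.2.2)⟩

lemma sc_eq (p q t : Idx n ℓ m) :
    sc k n ℓ m p q t
      = if h : Comp n ℓ m p q then (if t = compIdx n ℓ m p q h then 1 else 0) else 0 := rfl

lemma sum_sc_mul (p q : Idx n ℓ m) (f : Idx n ℓ m → k) :
    ∑ w : Idx n ℓ m, sc k n ℓ m p q w * f w
      = if h : Comp n ℓ m p q then f (compIdx n ℓ m p q h) else 0 := by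
  simp only [sc_eq]
  by_cases h : Comp n ℓ m p q
  · simp [h, ite_mul, Finset.sum_ite_eq]
  · simp [h]

lemma mulA_e_right (x : Idx n ℓ m → k) (u : Idx n ℓ m) (t : Idx n ℓ m) :
    mulA k n ℓ m x (e k n ℓ m u) t = ∑ p : Idx n ℓ m, x p * sc k n ℓ m p u t := by
  simp only [mulA, e]
  refine Finset.sum_congr rfl fun p _ => ?_
  rw [Finset.sum_eq_single u]
  · simp
  · intro q _ hq; simp [Pi.single_apply, hq]
  · simp

lemma mulA_e_left (y : Idx n ℓ m → k) (u : Idx n ℓ m) (t : Idx n ℓ m) :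
    mulA k n ℓ m (e k n ℓ m u) y t = ∑ q : Idx n ℓ m, y q * sc k n ℓ m u q t := by
  simp only [mulA, e]
  rw [Finset.sum_eq_single u]
  · refine Finset.sum_congr rfl fun q _ => ?_; simp
  · intro p _ hp
    refine Finset.sum_eq_zero fun q _ => ?_
    simp [Pi.single_apply, hp]
  · simp

end Aux

section Aux2
variable (k : Type*) [Field k] (n ℓ : ℕ) [NeZero n] (m : ZMod n → ℕ)

lemma comp_vertex (p q : Idx n ℓ m) (h1 : q.1 = p.1 + ((p.2.1 : ℕ) : ZMod n)) :
    q.1 + ((q.2.1 : ℕ) : ZMod n)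
      = p.1 + ((((p.2.1 : ℕ) + (q.2.1 : ℕ)) : ℕ) : ZMod n) := by
  have h := congrArg (fun w : ZMod n => w + ((q.2.1 : ℕ) : ZMod n)) h1
  rw [h]; push_cast; ring

lemma sc_assoc (p q z t₀ : Idx n ℓ m) :
    ∑ w : Idx n ℓ m, sc k n ℓ m p q w * sc k n ℓ m w z t₀
      = ∑ w : Idx n ℓ m, sc k n ℓ m q z w * sc k n ℓ m p w t₀ := by
  rw [sum_sc_mul, sum_sc_mul]
  by_cases h1 : Comp n ℓ m p q <;> by_cases h2 : Comp n ℓ m q z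
  · rw [dif_pos h1, dif_pos h2, sc_eq, sc_eq]
    have key := comp_vertex n ℓ m p q h1.1
    by_cases h3 : (p.2.1 : ℕ) + (q.2.1 : ℕ) + (z.2.1 : ℕ) < ℓ
    · have c3 : Comp n ℓ m (compIdx n ℓ m p q h1) z := by
        refine ⟨?_, ?_, ?_⟩
        · show z.1 = p.1 + ((((p.2.1 : ℕ) + (q.2.1 : ℕ)) : ℕ) : ZMod n)
          rw [h2.1, key]
        · exact h2.2.1
        · show ((p.2.1 : ℕ) + (q.2.1 : ℕ)) + (z.2.1 : ℕ) < ℓ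
          omega
      have c4 : Comp n ℓ m p (compIdx n ℓ m q z h2) := by
        refine ⟨h1.1, h1.2.1, ?_⟩
        show (p.2.1 : ℕ) + ((q.2.1 : ℕ) + (z.2.1 : ℕ)) < ℓ
        omega
      rw [dif_pos c3, dif_pos c4]
      have hcc : compIdx n ℓ m (compIdx n ℓ m p q h1) z c3
          = compIdx n ℓ m p (compIdx n ℓ m q z h2) c4 := by
        rw [idx_eq_iff]
        refine ⟨rfl, ?_, rfl, ?_⟩
        · show (p.2.1 : ℕ) + (q.2.1 : ℕ) + (z.2.1 : ℕ)
            = (p.2.1 : ℕ) + ((q.2.1 : ℕ) + (z.2.1 : ℕ))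
          omega
        · rfl
      rw [hcc]
    · have c3 : ¬ Comp n ℓ m (compIdx n ℓ m p q h1) z := fun hc => h3 hc.2.2
      have c4 : ¬ Comp n ℓ m p (compIdx n ℓ m q z h2) := by
        intro hc
        have h' : (p.2.1 : ℕ) + ((q.2.1 : ℕ) + (z.2.1 : ℕ)) < ℓ := hc.2.2
        omega
      rw [dif_neg c3, dif_neg c4]
  · rw [dif_pos h1, dif_neg h2, sc_eq]
    have key := comp_vertex n ℓ m p q h1.1
    have c3 : ¬ Comp n ℓ m (compIdx n ℓ m p q h1) z := by
      intro hc
      refine h2 ⟨?_, ?_, ?_⟩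
      · have h' : z.1 = p.1 + ((((p.2.1 : ℕ) + (q.2.1 : ℕ)) : ℕ) : ZMod n) := hc.1
        rw [h', ← key]
      · have h' : (z.2.2.1 : ℕ) = (q.2.2.2 : ℕ) := hc.2.1
        exact h'
      · have h' : ((p.2.1 : ℕ) + (q.2.1 : ℕ)) + (z.2.1 : ℕ) < ℓ := hc.2.2
        omega
    rw [dif_neg c3]
  · rw [dif_neg h1, dif_pos h2, sc_eq]
    have c4 : ¬ Comp n ℓ m p (compIdx n ℓ m q z h2) := by
      intro hc
      refine h1 ⟨hc.1, hc.2.1, ?_⟩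
      have h' : (p.2.1 : ℕ) + ((q.2.1 : ℕ) + (z.2.1 : ℕ)) < ℓ := hc.2.2
      omega
    rw [dif_neg c4]
  · rw [dif_neg h1, dif_neg h2]

lemma mulA_e_assoc (u : Idx n ℓ m) (x y : Idx n ℓ m → k) :
    mulA k n ℓ m (mulA k n ℓ m (e k n ℓ m u) x) y
      = mulA k n ℓ m (e k n ℓ m u) (mulA k n ℓ m x y) := by
  funext t₀
  have lhs : mulA k n ℓ m (mulA k n ℓ m (e k n ℓ m u) x) y t₀
      = ∑ q : Idx n ℓ m, ∑ z : Idx n ℓ m, (x q * y z) *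
          ∑ w : Idx n ℓ m, sc k n ℓ m u q w * sc k n ℓ m w z t₀ := by
    show (∑ w : Idx n ℓ m, ∑ z : Idx n ℓ m,
        mulA k n ℓ m (e k n ℓ m u) x w * y z * sc k n ℓ m w z t₀) = _
    simp only [mulA_e_left, Finset.sum_mul]
    conv_lhs => rw [Finset.sum_comm]
    refine Eq.trans (Finset.sum_congr rfl fun z _ => Finset.sum_comm) ?_
    conv_lhs => rw [Finset.sum_comm]
    refine Finset.sum_congr rfl fun q _ => Finset.sum_congr rfl fun z _ => ?_
    rw [Finset.mul_sum]
    exact Finset.sum_congr rfl fun w _ => by ring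
  have rhs : mulA k n ℓ m (e k n ℓ m u) (mulA k n ℓ m x y) t₀
      = ∑ q : Idx n ℓ m, ∑ z : Idx n ℓ m, (x q * y z) *
          ∑ w : Idx n ℓ m, sc k n ℓ m q z w * sc k n ℓ m u w t₀ := by
    rw [mulA_e_left]
    simp only [mulA, Finset.sum_mul]
    conv_lhs => rw [Finset.sum_comm]
    refine Eq.trans (Finset.sum_congr rfl fun q _ => Finset.sum_comm) ?_
    refine Finset.sum_congr rfl fun q _ => Finset.sum_congr rfl fun z _ => ?_
    rw [Finset.mul_sum]
    exact Finset.sum_congr rfl fun w _ => by ring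
  rw [lhs, rhs]
  refine Finset.sum_congr rfl fun q _ => Finset.sum_congr rfl fun z _ => ?_
  rw [sc_assoc]

end Aux2
section Aux3
variable (k : Type*) [Field k] (n ℓ : ℕ) [NeZero n] (m : ZMod n → ℕ)

lemma vtx_add_back (hℓ : 1 ≤ ℓ) (i : ZMod n) (kk : Fin ℓ) :
    vtx n ℓ i kk + (((ℓ - 1 - (kk : ℕ) : ℕ)) : ZMod n) = i := by
  have hk : (kk : ℕ) ≤ ℓ - 1 := by have := kk.isLt; omega
  unfold vtx
  rw [Nat.cast_sub hk]
  ring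

lemma sum_idx4 {M : Type*} [AddCommMonoid M] (f : Idx n ℓ m → M) :
    ∑ u : Idx n ℓ m, f u
      = ∑ i : ZMod n, ∑ kk : Fin ℓ, ∑ r : Fin (m i),
          ∑ t : Fin (m (i + ((kk : ℕ) : ZMod n))), f ⟨i, kk, (r, t)⟩ := by
  rw [← Finset.univ_sigma_univ, Finset.sum_sigma]
  refine Finset.sum_congr rfl fun i _ => ?_
  rw [← Finset.univ_sigma_univ, Finset.sum_sigma]
  refine Finset.sum_congr rfl fun kk _ => ?_
  rw [Fintype.sum_prod_type]

/-- The condition under which a Casimir-type coordinate sum is nonzero. -/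
def Econd (p' p q : Idx n ℓ m) : Prop :=
  p.1 = p'.1 ∧ (p.2.2.1 : ℕ) = (p'.2.2.1 : ℕ) ∧ (p'.2.1 : ℕ) ≤ (p.2.1 : ℕ) ∧
    q.1 = vtx n ℓ p.1 p.2.1 ∧ (q.2.1 : ℕ) = ℓ - 1 - (p.2.1 : ℕ) + (p'.2.1 : ℕ) ∧
    (q.2.2.2 : ℕ) = (p'.2.2.2 : ℕ)

noncomputable instance (p' p q : Idx n ℓ m) : Decidable (Econd n ℓ m p' p q) := by
  unfold Econd; infer_instance

noncomputable def Ecoef (p q : Idx n ℓ m) : k :=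
  if m (p.1 + ((p.2.1 : ℕ) : ZMod n)) = m (vtx n ℓ p.1 p.2.1)
    then (if (p.2.2.2 : ℕ) = (q.2.2.1 : ℕ) then 1 else 0) else 1

noncomputable def E (p' p q : Idx n ℓ m) : k :=
  if Econd n ℓ m p' p q then Ecoef k n ℓ m p q else 0

lemma G_eq_E (hℓ : 1 ≤ ℓ) (p' p q : Idx n ℓ m) :
    (∑ i : ZMod n, ∑ kk : Fin ℓ, ∑ r : Fin (m i),
      ∑ t : Fin (m (i + ((kk : ℕ) : ZMod n))), ∑ t' : Fin (m (vtx n ℓ i kk)),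
        cCoef k n ℓ m i kk t t' * e k n ℓ m (cFst n ℓ m i kk r t) p
          * sc k n ℓ m (cSnd n ℓ m i kk r t') p' q)
      = E k n ℓ m p' p q := by
  have h0 := (sum_idx4 n ℓ m (fun u => ∑ t' : Fin (m (vtx n ℓ u.1 u.2.1)),
      cCoef k n ℓ m u.1 u.2.1 u.2.2.2 t' * e k n ℓ m u p
        * sc k n ℓ m (cSnd n ℓ m u.1 u.2.1 u.2.2.1 t') p' q)).symm
  refine Eq.trans h0 ?_
  rw [Finset.sum_eq_single p]
  rotate_left
  · intro u _ hu
    refine Finset.sum_eq_zero fun t' _ => ?_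
    have he : e k n ℓ m u p = 0 := by
      simp [e, Pi.single_apply, Ne.symm hu]
    rw [he, mul_zero, zero_mul]
  · intro h; exact absurd (Finset.mem_univ p) h
  obtain ⟨ai, aj, ar, as⟩ := p'
  obtain ⟨pi, pj, pr, ps⟩ := p
  obtain ⟨qi, qj, qr, qs⟩ := q
  dsimp only
  simp only [e, Pi.single_eq_same, mul_one]
  have hv := vtx_add_back n ℓ hℓ pi pj
  by_cases hc : pi = ai ∧ (pr : ℕ) = (ar : ℕ) ∧ (aj : ℕ) ≤ (pj : ℕ)
  · obtain ⟨hc1, hc2, hc3⟩ := hc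
    have hcm : ∀ t' : Fin (m (vtx n ℓ pi pj)),
        Comp n ℓ m (cSnd n ℓ m pi pj pr t') (⟨ai, aj, (ar, as)⟩ : Idx n ℓ m) := by
      intro t'
      refine ⟨hc1.symm.trans hv.symm, hc2.symm, ?_⟩
      show ℓ - 1 - (pj : ℕ) + (aj : ℕ) < ℓ
      have := pj.isLt; omega
    by_cases hrest : qi = vtx n ℓ pi pj ∧ (qj : ℕ) = ℓ - 1 - (pj : ℕ) + (aj : ℕ)
        ∧ (qs : ℕ) = (as : ℕ)
    · obtain ⟨hr1, hr2, hr3⟩ := hrest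
      have hm1 : m qi = m (vtx n ℓ pi pj) := congrArg m hr1
      have hEc : Econd n ℓ m ⟨ai, aj, (ar, as)⟩ ⟨pi, pj, (pr, ps)⟩ ⟨qi, qj, (qr, qs)⟩ :=
        ⟨hc1, hc2, hc3, hr1, hr2, hr3⟩
      rw [Finset.sum_eq_single (⟨(qr : ℕ), hm1 ▸ qr.isLt⟩ : Fin (m (vtx n ℓ pi pj)))]
      rotate_left
      · intro t' _ ht'
        rw [sc_eq, dif_pos (hcm t'), if_neg, mul_zero]
        intro hq
        rw [idx_eq_iff] at hq
        exact ht' (Fin.ext hq.2.2.1.symm)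
      · intro hn; exact absurd (Finset.mem_univ _) hn
      have hqc : (⟨qi, qj, (qr, qs)⟩ : Idx n ℓ m)
          = compIdx n ℓ m (cSnd n ℓ m pi pj pr ⟨(qr : ℕ), hm1 ▸ qr.isLt⟩)
              ⟨ai, aj, (ar, as)⟩ (hcm _) := by
        rw [idx_eq_iff]
        exact ⟨hr1, hr2, rfl, hr3⟩
      rw [sc_eq, dif_pos (hcm _), if_pos hqc, mul_one]
      simp only [E]
      rw [if_pos hEc]
      rfl
    · have hE0 : E k n ℓ m ⟨ai, aj, (ar, as)⟩ ⟨pi, pj, (pr, ps)⟩ ⟨qi, qj, (qr, qs)⟩ = 0 := by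
        simp only [E]
        rw [if_neg]
        intro hEc
        exact hrest ⟨hEc.2.2.2.1, hEc.2.2.2.2.1, hEc.2.2.2.2.2⟩
      rw [hE0]
      refine Finset.sum_eq_zero fun t' _ => ?_
      rw [sc_eq, dif_pos (hcm t'), if_neg, mul_zero]
      intro hq
      rw [idx_eq_iff] at hq
      exact hrest ⟨hq.1, hq.2.1, hq.2.2.2⟩
  · have hE0 : E k n ℓ m ⟨ai, aj, (ar, as)⟩ ⟨pi, pj, (pr, ps)⟩ ⟨qi, qj, (qr, qs)⟩ = 0 := by
      simp only [E]
      rw [if_neg]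
      intro hEc
      exact hc ⟨hEc.1, hEc.2.1, hEc.2.2.1⟩
    rw [hE0]
    refine Finset.sum_eq_zero fun t' _ => ?_
    rw [sc_eq, dif_neg, mul_zero]
    intro hcomp
    refine hc ⟨?_, ?_, ?_⟩
    · exact (hcomp.1.trans hv).symm
    · exact hcomp.2.1.symm
    · have h3 : ℓ - 1 - (pj : ℕ) + (aj : ℕ) < ℓ := hcomp.2.2
      have := pj.isLt; omega

end Aux3
section Aux4
variable (k : Type*) [Field k] (n ℓ : ℕ) [NeZero n] (m : ZMod n → ℕ)

lemma F_eq_E (hℓ : 1 ≤ ℓ) (p' p q : Idx n ℓ m) :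
    (∑ i : ZMod n, ∑ kk : Fin ℓ, ∑ r : Fin (m i),
      ∑ t : Fin (m (i + ((kk : ℕ) : ZMod n))), ∑ t' : Fin (m (vtx n ℓ i kk)),
        cCoef k n ℓ m i kk t t' * sc k n ℓ m p' (cFst n ℓ m i kk r t) p
          * e k n ℓ m (cSnd n ℓ m i kk r t') q)
      = E k n ℓ m p' p q := by
  have h0 := (sum_idx4 n ℓ m (fun u => ∑ t' : Fin (m (vtx n ℓ u.1 u.2.1)),
      cCoef k n ℓ m u.1 u.2.1 u.2.2.2 t' * sc k n ℓ m p' u p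
        * e k n ℓ m (cSnd n ℓ m u.1 u.2.1 u.2.2.1 t') q)).symm
  refine Eq.trans h0 ?_
  obtain ⟨ai, aj, ar, as⟩ := p'
  obtain ⟨pi, pj, pr, ps⟩ := p
  obtain ⟨qi, qj, qr, qs⟩ := q
  by_cases hc : pi = ai ∧ (pr : ℕ) = (ar : ℕ) ∧ (aj : ℕ) ≤ (pj : ℕ)
  · obtain ⟨hc1, hc2, hc3⟩ := hc
    have hlt : (pj : ℕ) - (aj : ℕ) < ℓ := by have := pj.isLt; omega
    have hzm : (ai + ((aj : ℕ) : ZMod n)) + ((((pj : ℕ) - (aj : ℕ) : ℕ)) : ZMod n)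
        = pi + ((pj : ℕ) : ZMod n) := by
      rw [Nat.cast_sub hc3, hc1]; ring
    set u₀ : Idx n ℓ m :=
      ⟨ai + ((aj : ℕ) : ZMod n), ⟨(pj : ℕ) - (aj : ℕ), hlt⟩,
        (as, Fin.cast (congrArg m hzm.symm) ps)⟩ with hu₀
    have hcmp : Comp n ℓ m (⟨ai, aj, (ar, as)⟩ : Idx n ℓ m) u₀ := by
      refine ⟨rfl, rfl, ?_⟩
      show (aj : ℕ) + ((pj : ℕ) - (aj : ℕ)) < ℓ
      have := pj.isLt; omega
    have hpc : (⟨pi, pj, (pr, ps)⟩ : Idx n ℓ m)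
        = compIdx n ℓ m ⟨ai, aj, (ar, as)⟩ u₀ hcmp := by
      rw [idx_eq_iff]
      refine ⟨hc1, ?_, hc2, rfl⟩
      show (pj : ℕ) = (aj : ℕ) + ((pj : ℕ) - (aj : ℕ))
      omega
    have hvtx : vtx n ℓ u₀.1 u₀.2.1 = vtx n ℓ pi pj := by
      unfold vtx
      show (ai + ((aj : ℕ) : ZMod n)) + ((((pj : ℕ) - (aj : ℕ) : ℕ)) : ZMod n)
          - (((ℓ - 1 : ℕ)) : ZMod n) = _
      rw [hzm]
    rw [Finset.sum_eq_single u₀]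
    rotate_left
    · intro u _ hu
      refine Finset.sum_eq_zero fun t' _ => ?_
      by_cases hcm2 : Comp n ℓ m (⟨ai, aj, (ar, as)⟩ : Idx n ℓ m) u
      · rw [sc_eq, dif_pos hcm2, if_neg, mul_zero, zero_mul]
        intro hp
        rw [idx_eq_iff] at hp
        apply hu
        rw [idx_eq_iff]
        refine ⟨hcm2.1, ?_, hcm2.2.1, hp.2.2.2.symm⟩
        have h2 : (pj : ℕ) = (aj : ℕ) + (u.2.1 : ℕ) := hp.2.1
        show (u.2.1 : ℕ) = (pj : ℕ) - (aj : ℕ)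
        omega
      · rw [sc_eq, dif_neg hcm2, mul_zero, zero_mul]
    · intro hn; exact absurd (Finset.mem_univ _) hn
    have hsc1 : sc k n ℓ m ⟨ai, aj, (ar, as)⟩ u₀ ⟨pi, pj, (pr, ps)⟩ = 1 := by
      rw [sc_eq, dif_pos hcmp, if_pos hpc]
    by_cases hrest : qi = vtx n ℓ pi pj ∧ (qj : ℕ) = ℓ - 1 - (pj : ℕ) + (aj : ℕ)
        ∧ (qs : ℕ) = (as : ℕ)
    · obtain ⟨hr1, hr2, hr3⟩ := hrest
      have hm1 : m qi = m (vtx n ℓ u₀.1 u₀.2.1) := congrArg m (hr1.trans hvtx.symm)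
      have hEc : Econd n ℓ m ⟨ai, aj, (ar, as)⟩ ⟨pi, pj, (pr, ps)⟩ ⟨qi, qj, (qr, qs)⟩ :=
        ⟨hc1, hc2, hc3, hr1, hr2, hr3⟩
      rw [Finset.sum_eq_single (⟨(qr : ℕ), hm1 ▸ qr.isLt⟩ : Fin (m (vtx n ℓ u₀.1 u₀.2.1)))]
      rotate_left
      · intro t' _ ht'
        have he : e k n ℓ m (cSnd n ℓ m u₀.1 u₀.2.1 u₀.2.2.1 t') ⟨qi, qj, (qr, qs)⟩ = 0 := by
          simp only [e, Pi.single_apply]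
          rw [if_neg]
          intro hq
          rw [idx_eq_iff] at hq
          exact ht' (Fin.ext hq.2.2.1.symm)
        rw [he, mul_zero]
      · intro hn; exact absurd (Finset.mem_univ _) hn
      have he1 : e k n ℓ m (cSnd n ℓ m u₀.1 u₀.2.1 u₀.2.2.1 ⟨(qr : ℕ), hm1 ▸ qr.isLt⟩)
          ⟨qi, qj, (qr, qs)⟩ = 1 := by
        simp only [e, Pi.single_apply]
        rw [if_pos]
        rw [idx_eq_iff]
        refine ⟨hr1.trans hvtx.symm, ?_, rfl, hr3⟩
        show (qj : ℕ) = ℓ - 1 - ((pj : ℕ) - (aj : ℕ))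
        have := pj.isLt; omega
      rw [hsc1, mul_one, he1, mul_one]
      simp only [E]
      rw [if_pos hEc]
      have hmm1 : m (u₀.1 + ((u₀.2.1 : ℕ) : ZMod n)) = m (pi + ((pj : ℕ) : ZMod n)) :=
        congrArg m hzm
      have hc13 : (m (u₀.1 + ((u₀.2.1 : ℕ) : ZMod n)) = m (vtx n ℓ u₀.1 u₀.2.1))
          = (m (pi + ((pj : ℕ) : ZMod n)) = m (vtx n ℓ pi pj)) := by
        rw [hmm1, hvtx]
      simp only [cCoef, Ecoef, hc13]
      rfl
    · have hE0 : E k n ℓ m ⟨ai, aj, (ar, as)⟩ ⟨pi, pj, (pr, ps)⟩ ⟨qi, qj, (qr, qs)⟩ = 0 := by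
        simp only [E]
        rw [if_neg]
        intro hEc
        exact hrest ⟨hEc.2.2.2.1, hEc.2.2.2.2.1, hEc.2.2.2.2.2⟩
      rw [hE0]
      refine Finset.sum_eq_zero fun t' _ => ?_
      have he : e k n ℓ m (cSnd n ℓ m u₀.1 u₀.2.1 u₀.2.2.1 t') ⟨qi, qj, (qr, qs)⟩ = 0 := by
        simp only [e, Pi.single_apply]
        rw [if_neg]
        intro hq
        rw [idx_eq_iff] at hq
        refine hrest ⟨hq.1.trans hvtx, ?_, hq.2.2.2⟩
        have h2 : (qj : ℕ) = ℓ - 1 - ((pj : ℕ) - (aj : ℕ)) := hq.2.1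
        have := pj.isLt; omega
      rw [he, mul_zero]
  · have hE0 : E k n ℓ m ⟨ai, aj, (ar, as)⟩ ⟨pi, pj, (pr, ps)⟩ ⟨qi, qj, (qr, qs)⟩ = 0 := by
      simp only [E]
      rw [if_neg]
      intro hEc
      exact hc ⟨hEc.1, hEc.2.1, hEc.2.2.1⟩
    rw [hE0]
    refine Finset.sum_eq_zero fun u _ => Finset.sum_eq_zero fun t' _ => ?_
    by_cases hcm2 : Comp n ℓ m (⟨ai, aj, (ar, as)⟩ : Idx n ℓ m) u
    · rw [sc_eq, dif_pos hcm2, if_neg, mul_zero, zero_mul]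
      intro hp
      rw [idx_eq_iff] at hp
      refine hc ⟨hp.1, hp.2.2.1, ?_⟩
      have h2 : (pj : ℕ) = (aj : ℕ) + (u.2.1 : ℕ) := hp.2.1
      omega
    · rw [sc_eq, dif_neg hcm2, mul_zero, zero_mul]

end Aux4
section Aux5
variable (k : Type*) [Field k] (n ℓ : ℕ) [NeZero n] (m : ZMod n → ℕ)

/-- Single index type for the Casimir element's five-fold sum. -/
abbrev J (n ℓ : ℕ) [NeZero n] (m : ZMod n → ℕ) : Type _ :=
  Σ (i : ZMod n) (kk : Fin ℓ),
    Fin (m i) × Fin (m (i + ((kk : ℕ) : ZMod n))) × Fin (m (vtx n ℓ i kk))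

noncomputable def cFstJ (j : J n ℓ m) : Idx n ℓ m :=
  cFst n ℓ m j.1 j.2.1 j.2.2.1 j.2.2.2.1

noncomputable def cSndJ (j : J n ℓ m) : Idx n ℓ m :=
  cSnd n ℓ m j.1 j.2.1 j.2.2.1 j.2.2.2.2

noncomputable def wJ (j : J n ℓ m) : k :=
  cCoef k n ℓ m j.1 j.2.1 j.2.2.2.1 j.2.2.2.2

lemma sum_J {M : Type*} [AddCommMonoid M] (f : J n ℓ m → M) :
    ∑ j : J n ℓ m, f j
      = ∑ i : ZMod n, ∑ kk : Fin ℓ, ∑ r : Fin (m i),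
          ∑ t : Fin (m (i + ((kk : ℕ) : ZMod n))), ∑ t' : Fin (m (vtx n ℓ i kk)),
            f ⟨i, kk, (r, t, t')⟩ := by
  rw [← Finset.univ_sigma_univ, Finset.sum_sigma]
  refine Finset.sum_congr rfl fun i _ => ?_
  rw [← Finset.univ_sigma_univ, Finset.sum_sigma]
  refine Finset.sum_congr rfl fun kk _ => ?_
  rw [Fintype.sum_prod_type]
  refine Finset.sum_congr rfl fun r _ => ?_
  rw [Fintype.sum_prod_type]

lemma FJ_eq_E (hℓ : 1 ≤ ℓ) (p' p q : Idx n ℓ m) :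
    (∑ j : J n ℓ m, wJ k n ℓ m j * sc k n ℓ m p' (cFstJ n ℓ m j) p
        * e k n ℓ m (cSndJ n ℓ m j) q)
      = E k n ℓ m p' p q :=
  (sum_J n ℓ m _).trans (F_eq_E k n ℓ m hℓ p' p q)

lemma GJ_eq_E (hℓ : 1 ≤ ℓ) (p' p q : Idx n ℓ m) :
    (∑ j : J n ℓ m, wJ k n ℓ m j * e k n ℓ m (cFstJ n ℓ m j) p
        * sc k n ℓ m (cSndJ n ℓ m j) p' q)
      = E k n ℓ m p' p q :=
  (sum_J n ℓ m _).trans (G_eq_E k n ℓ m hℓ p' p q)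

open TensorProduct in
set_option synthInstance.maxHeartbeats 1000000 in
set_option maxHeartbeats 1000000 in
lemma casimirJ (hℓ : 1 ≤ ℓ) (x : Idx n ℓ m → k) :
    (∑ j : J n ℓ m, wJ k n ℓ m j •
        (mulA k n ℓ m x (e k n ℓ m (cFstJ n ℓ m j)) ⊗ₜ[k] e k n ℓ m (cSndJ n ℓ m j)))
      = ∑ j : J n ℓ m, wJ k n ℓ m j •
          (e k n ℓ m (cFstJ n ℓ m j) ⊗ₜ[k] mulA k n ℓ m (e k n ℓ m (cSndJ n ℓ m j)) x) := by
  apply (Module.Basis.tensorProduct (Pi.basisFun k (Idx n ℓ m))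
    (Pi.basisFun k (Idx n ℓ m))).repr.injective
  ext ⟨p, q⟩
  simp only [map_sum, map_smul, Finsupp.coe_finset_sum, Finset.sum_apply, Finsupp.smul_apply,
    Module.Basis.tensorProduct_repr_tmul_apply, Pi.basisFun_repr, smul_eq_mul]
  have hL : (∑ j : J n ℓ m, wJ k n ℓ m j *
        (e k n ℓ m (cSndJ n ℓ m j) q * mulA k n ℓ m x (e k n ℓ m (cFstJ n ℓ m j)) p))
      = ∑ p₀ : Idx n ℓ m, x p₀ * ∑ j : J n ℓ m, wJ k n ℓ m j
          * sc k n ℓ m p₀ (cFstJ n ℓ m j) p * e k n ℓ m (cSndJ n ℓ m j) q := by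
    calc (∑ j : J n ℓ m, wJ k n ℓ m j *
          (e k n ℓ m (cSndJ n ℓ m j) q * mulA k n ℓ m x (e k n ℓ m (cFstJ n ℓ m j)) p))
        = ∑ j : J n ℓ m, ∑ p₀ : Idx n ℓ m, x p₀ *
            (wJ k n ℓ m j * sc k n ℓ m p₀ (cFstJ n ℓ m j) p
              * e k n ℓ m (cSndJ n ℓ m j) q) := by
          refine Finset.sum_congr rfl fun j _ => ?_
          rw [mulA_e_right, Finset.mul_sum, Finset.mul_sum]
          exact Finset.sum_congr rfl fun p₀ _ => by ring
      _ = ∑ p₀ : Idx n ℓ m, ∑ j : J n ℓ m, x p₀ *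
            (wJ k n ℓ m j * sc k n ℓ m p₀ (cFstJ n ℓ m j) p
              * e k n ℓ m (cSndJ n ℓ m j) q) := Finset.sum_comm
      _ = ∑ p₀ : Idx n ℓ m, x p₀ * ∑ j : J n ℓ m, wJ k n ℓ m j
            * sc k n ℓ m p₀ (cFstJ n ℓ m j) p * e k n ℓ m (cSndJ n ℓ m j) q := by
          refine Finset.sum_congr rfl fun p₀ _ => ?_
          rw [Finset.mul_sum]
  have hR : (∑ j : J n ℓ m, wJ k n ℓ m j *
        (mulA k n ℓ m (e k n ℓ m (cSndJ n ℓ m j)) x q * e k n ℓ m (cFstJ n ℓ m j) p))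
      = ∑ q₀ : Idx n ℓ m, x q₀ * ∑ j : J n ℓ m, wJ k n ℓ m j
          * e k n ℓ m (cFstJ n ℓ m j) p * sc k n ℓ m (cSndJ n ℓ m j) q₀ q := by
    calc (∑ j : J n ℓ m, wJ k n ℓ m j *
          (mulA k n ℓ m (e k n ℓ m (cSndJ n ℓ m j)) x q * e k n ℓ m (cFstJ n ℓ m j) p))
        = ∑ j : J n ℓ m, ∑ q₀ : Idx n ℓ m, x q₀ *
            (wJ k n ℓ m j * e k n ℓ m (cFstJ n ℓ m j) p
              * sc k n ℓ m (cSndJ n ℓ m j) q₀ q) := by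
          refine Finset.sum_congr rfl fun j _ => ?_
          rw [mulA_e_left, Finset.sum_mul, Finset.mul_sum]
          exact Finset.sum_congr rfl fun q₀ _ => by ring
      _ = ∑ q₀ : Idx n ℓ m, ∑ j : J n ℓ m, x q₀ *
            (wJ k n ℓ m j * e k n ℓ m (cFstJ n ℓ m j) p
              * sc k n ℓ m (cSndJ n ℓ m j) q₀ q) := Finset.sum_comm
      _ = ∑ q₀ : Idx n ℓ m, x q₀ * ∑ j : J n ℓ m, wJ k n ℓ m j
            * e k n ℓ m (cFstJ n ℓ m j) p * sc k n ℓ m (cSndJ n ℓ m j) q₀ q := by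
          refine Finset.sum_congr rfl fun q₀ _ => ?_
          rw [Finset.mul_sum]
  rw [hL, hR]
  refine Finset.sum_congr rfl fun p₀ _ => ?_
  rw [FJ_eq_E k n ℓ m hℓ p₀ p q, GJ_eq_E k n ℓ m hℓ p₀ p q]

end Aux5
section Aux6
variable (k : Type*) [Field k] (n ℓ : ℕ) [NeZero n] (m : ZMod n → ℕ)

open TensorProduct

lemma DL_eq (x : Idx n ℓ m → k) :
    DL k n ℓ m x = ∑ j : J n ℓ m, wJ k n ℓ m j •
      (e k n ℓ m (cFstJ n ℓ m j) ⊗ₜ[k] mulA k n ℓ m (e k n ℓ m (cSndJ n ℓ m j)) x) := by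
  have h1 : DL k n ℓ m x
      = ∑ i : ZMod n, ∑ kk : Fin ℓ, ∑ r : Fin (m i),
          ∑ t : Fin (m (i + ((kk : ℕ) : ZMod n))), ∑ t' : Fin (m (vtx n ℓ i kk)),
            cCoef k n ℓ m i kk t t' •
              (e k n ℓ m (cFst n ℓ m i kk r t)
                ⊗ₜ[k] mulA k n ℓ m (e k n ℓ m (cSnd n ℓ m i kk r t')) x) := by
    simp only [DL, LinearMap.coe_mk, AddHom.coe_mk]
  rw [h1]
  exact (sum_J n ℓ m (fun j => wJ k n ℓ m j •
    (e k n ℓ m (cFstJ n ℓ m j) ⊗ₜ[k] mulA k n ℓ m (e k n ℓ m (cSndJ n ℓ m j)) x))).symm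

lemma DL_mul_right (x y : Idx n ℓ m → k) :
    DL k n ℓ m (mulA k n ℓ m x y)
      = LinearMap.lTensor _ (mulRightL k n ℓ m y) (DL k n ℓ m x) := by
  rw [DL_eq, DL_eq, map_sum]
  refine Finset.sum_congr rfl fun j _ => ?_
  rw [map_smul, LinearMap.lTensor_tmul]
  have h : (mulRightL k n ℓ m y) (mulA k n ℓ m (e k n ℓ m (cSndJ n ℓ m j)) x)
      = mulA k n ℓ m (e k n ℓ m (cSndJ n ℓ m j)) (mulA k n ℓ m x y) :=
    mulA_e_assoc k n ℓ m _ x y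
  rw [h]

lemma DL_mul_left (hℓ : 1 ≤ ℓ) (x y : Idx n ℓ m → k) :
    DL k n ℓ m (mulA k n ℓ m x y)
      = LinearMap.rTensor _ (mulLeftL k n ℓ m x) (DL k n ℓ m y) := by
  have hR : LinearMap.rTensor _ (mulLeftL k n ℓ m x) (DL k n ℓ m y)
      = ∑ j : J n ℓ m, wJ k n ℓ m j •
          (mulA k n ℓ m x (e k n ℓ m (cFstJ n ℓ m j))
            ⊗ₜ[k] mulA k n ℓ m (e k n ℓ m (cSndJ n ℓ m j)) y) := by
    rw [DL_eq, map_sum]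
    refine Finset.sum_congr rfl fun j _ => ?_
    rw [map_smul, LinearMap.rTensor_tmul]
    rfl
  have hstep : DL k n ℓ m (mulA k n ℓ m x y)
      = ∑ j : J n ℓ m, wJ k n ℓ m j •
          (e k n ℓ m (cFstJ n ℓ m j)
            ⊗ₜ[k] mulA k n ℓ m (mulA k n ℓ m (e k n ℓ m (cSndJ n ℓ m j)) x) y) := by
    rw [DL_eq]
    refine Finset.sum_congr rfl fun j _ => ?_
    rw [mulA_e_assoc]
  have happ := congrArg (LinearMap.lTensor (Idx n ℓ m → k) (mulRightL k n ℓ m y))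
    (casimirJ k n ℓ m hℓ x)
  rw [map_sum, map_sum] at happ
  simp only [map_smul, LinearMap.lTensor_tmul] at happ
  rw [hstep, hR]
  exact happ.symm

set_option synthInstance.maxHeartbeats 1000000 in
set_option maxHeartbeats 1000000 in
lemma coassocJ (hℓ : 1 ≤ ℓ) (x : Idx n ℓ m → k) :
    (TensorProduct.assoc k _ _ _)
        ((LinearMap.rTensor _ (DL k n ℓ m)) (DL k n ℓ m x))
      = (LinearMap.lTensor _ (DL k n ℓ m)) (DL k n ℓ m x) := by
  have hA : (TensorProduct.assoc k _ _ _)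
        ((LinearMap.rTensor _ (DL k n ℓ m)) (DL k n ℓ m x))
      = ∑ j : J n ℓ m, ∑ j2 : J n ℓ m, (wJ k n ℓ m j * wJ k n ℓ m j2) •
          (e k n ℓ m (cFstJ n ℓ m j2) ⊗ₜ[k]
            (mulA k n ℓ m (e k n ℓ m (cSndJ n ℓ m j2)) (e k n ℓ m (cFstJ n ℓ m j))
              ⊗ₜ[k] mulA k n ℓ m (e k n ℓ m (cSndJ n ℓ m j)) x)) := by
    rw [DL_eq k n ℓ m x, map_sum, map_sum]
    refine Finset.sum_congr rfl fun j _ => ?_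
    rw [map_smul, map_smul, LinearMap.rTensor_tmul, DL_eq k n ℓ m (e k n ℓ m (cFstJ n ℓ m j)),
      TensorProduct.sum_tmul, map_sum, Finset.smul_sum]
    refine Finset.sum_congr rfl fun j2 _ => ?_
    rw [← TensorProduct.smul_tmul', map_smul, TensorProduct.assoc_tmul, smul_smul]
  have hB : (LinearMap.lTensor _ (DL k n ℓ m)) (DL k n ℓ m x)
      = ∑ j : J n ℓ m, ∑ j2 : J n ℓ m, (wJ k n ℓ m j * wJ k n ℓ m j2) •
          (e k n ℓ m (cFstJ n ℓ m j) ⊗ₜ[k]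
            (mulA k n ℓ m (e k n ℓ m (cSndJ n ℓ m j)) (e k n ℓ m (cFstJ n ℓ m j2))
              ⊗ₜ[k] mulA k n ℓ m (e k n ℓ m (cSndJ n ℓ m j2)) x)) := by
    rw [DL_eq k n ℓ m x, map_sum]
    refine Finset.sum_congr rfl fun j _ => ?_
    rw [map_smul, LinearMap.lTensor_tmul, DL_mul_left k n ℓ m hℓ (e k n ℓ m (cSndJ n ℓ m j)) x,
      DL_eq k n ℓ m x, map_sum, TensorProduct.tmul_sum, Finset.smul_sum]
    refine Finset.sum_congr rfl fun j2 _ => ?_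
    rw [map_smul, LinearMap.rTensor_tmul, TensorProduct.tmul_smul, smul_smul]
    rfl
  rw [hA, hB, Finset.sum_comm]
  refine Finset.sum_congr rfl fun j _ => Finset.sum_congr rfl fun j2 _ => ?_
  rw [mul_comm]

end Aux6

/-- The element
`C = ∑ (1 - δ_{m_{i+k},m_{i+k-ℓ+1}}(1-δ_{t,t'})) X_{i,k}^{r,t} ⊗ X_{i+k-ℓ+1,ℓ-1-k}^{t',r}`
is a Casimir element of the NSY algebra `A`: `(x ⊗ 1)C = C(1 ⊗ x)` for all `x ∈ A`.
Consequently `Δ(x) := C·(1 ⊗ x)` is coassociative and an `A`-bimodule map, i.e. it makes `A`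
a non-counital Frobenius algebra. -/
theorem nsy_casimir
    (k : Type*) [Field k] (n ℓ : ℕ) [NeZero n] (hℓ : 1 ≤ ℓ) (hℓn : ℓ ≤ n - 1)
    (m : ZMod n → ℕ) (hm : ∀ i, 0 < m i) :
    (∀ x : Idx n ℓ m → k,
      (∑ i : ZMod n, ∑ kk : Fin ℓ, ∑ r : Fin (m i),
        ∑ t : Fin (m (i + ((kk : ℕ) : ZMod n))), ∑ t' : Fin (m (vtx n ℓ i kk)),
          cCoef k n ℓ m i kk t t' •
            (mulA k n ℓ m x (e k n ℓ m (cFst n ℓ m i kk r t))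
              ⊗ₜ[k] e k n ℓ m (cSnd n ℓ m i kk r t')))
      = ∑ i : ZMod n, ∑ kk : Fin ℓ, ∑ r : Fin (m i),
          ∑ t : Fin (m (i + ((kk : ℕ) : ZMod n))), ∑ t' : Fin (m (vtx n ℓ i kk)),
            cCoef k n ℓ m i kk t t' •
              (e k n ℓ m (cFst n ℓ m i kk r t)
                ⊗ₜ[k] mulA k n ℓ m (e k n ℓ m (cSnd n ℓ m i kk r t')) x)) ∧
    (∀ x : Idx n ℓ m → k,
      (TensorProduct.assoc k _ _ _)
          ((LinearMap.rTensor _ (DL k n ℓ m)) (DL k n ℓ m x))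
        = (LinearMap.lTensor _ (DL k n ℓ m)) (DL k n ℓ m x)) ∧
    (∀ x y : Idx n ℓ m → k,
      DL k n ℓ m (mulA k n ℓ m x y)
          = (LinearMap.lTensor _ (mulRightL k n ℓ m y)) (DL k n ℓ m x) ∧
      DL k n ℓ m (mulA k n ℓ m x y)
          = (LinearMap.rTensor _ (mulLeftL k n ℓ m x)) (DL k n ℓ m y)) := by
  refine ⟨fun x => ?_, fun x => coassocJ k n ℓ m hℓ x,
    fun x y => ⟨DL_mul_right k n ℓ m x y, DL_mul_left k n ℓ m hℓ x y⟩⟩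
  refine Eq.trans ?_ (Eq.trans (casimirJ k n ℓ m hℓ x) ?_)
  · exact (sum_J n ℓ m (fun j => wJ k n ℓ m j •
      (mulA k n ℓ m x (e k n ℓ m (cFstJ n ℓ m j)) ⊗ₜ[k] e k n ℓ m (cSndJ n ℓ m j)))).symm
  · exact sum_J n ℓ m (fun j => wJ k n ℓ m j •
      (e k n ℓ m (cFstJ n ℓ m j) ⊗ₜ[k] mulA k n ℓ m (e k n ℓ m (cSndJ n ℓ m j)) x))
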